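/- arXiv:1612.04625 — 3 statements merged into one kernel-verified Lean document; each statement's English description precedes it below -/
import Mathlib

section
/- Core of Theorem 1 (continuity of the witnessed non-Markovianity). Let ι be a nonempty finite type and c ≥ 0 a real number. Let ρ₁, ρ₂, σ₁, σ₂ ∈ Matrix ι ι ℂ be Hermitian matrices (the Choi states of two processes Φ and Λ at times t₁, t₂), and let W₁, W₂, M₁, M₂ ∈ Matrix ι ι ℂ be Hermitian matrices (the optimal entanglement witnesses) satisfying for each i ∈ {1,2}: (a) ‖Wᵢ‖₁ ≤ c and ‖Mᵢ‖₁ ≤ c; (b) optimality of Wᵢ at ρᵢ: Re Tr(Wᵢ ρᵢ) ≤ Re Tr(Mᵢ ρᵢ); (c) optimality of Mᵢ at σᵢ: Re Tr(Mᵢ σᵢ) ≤ Re Tr(Wᵢ σᵢ). Define the witnessed non-Markovianities N_W := max(0, Re Tr(W₁ ρ₁) − Re Tr(W₂ ρ₂)) and N_M := max(0, Re Tr(M₁ σ₁) − Re Tr(M₂ σ₂)). Then |N_W − N_M| ≤ c·(‖ρ₁ − σ₁‖₁ + ‖ρ₂ − σ₂‖₁). -/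
/-!
For Hermitian `W` and `A`, writing both in eigenbases gives `Tr (W A) = ∑ᵢⱼ λᵢ μⱼ |Qᵢⱼ|²` with
`Q` unitary, so `|Tr (W A)| ≤ ‖W‖₁ ‖A‖₁`; hence each witness value `Re Tr (W ρ)` is
`c`-Lipschitz in `ρ` for the trace norm. Optimality of `W` at `ρ` and of `M` at `σ` squeezes
`Re Tr (W ρ) - Re Tr (M σ)` between `Re Tr (W (ρ - σ))` and `Re Tr (M (ρ - σ))`, and
`x ↦ max 0 x` is `1`-Lipschitz.
-/

open Matrix ComplexOrder

/-- The trace norm of a complex square matrix: the trace of the positive semidefinite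
square root of `Aᴴ * A`. -/
noncomputable def traceNorm {ι : Type*} [Fintype ι] [DecidableEq ι]
    (A : Matrix ι ι ℂ) : ℝ :=
  (((Matrix.posSemidef_conjTranspose_mul_self A).1.eigenvectorUnitary.1 *
      diagonal (((↑) : ℝ → ℂ) ∘ (√·) ∘ (Matrix.posSemidef_conjTranspose_mul_self A).1.eigenvalues) *
      (star (Matrix.posSemidef_conjTranspose_mul_self A).1.eigenvectorUnitary :
        Matrix ι ι ℂ)).trace).re

namespace Matrix

variable {ι 𝕜 : Type*} [Fintype ι] [DecidableEq ι] [RCLike 𝕜]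

theorem IsHermitian.trace_cfc {A : Matrix ι ι 𝕜} (hA : A.IsHermitian) (f : ℝ → ℝ) :
    (cfc f A).trace = ∑ i, (f (hA.eigenvalues i) : 𝕜) := by
  rw [hA.cfc_eq, IsHermitian.cfc, Unitary.conjStarAlgAut_apply, trace_mul_cycle,
    Unitary.coe_star_mul_self, Matrix.one_mul, trace_diagonal]
  rfl

theorem trace_diagonal_mul_mul_diagonal_mul_star (Q : Matrix ι ι 𝕜) (a b : ι → 𝕜) :
    (diagonal a * Q * diagonal b * star Q).trace =
      ∑ i, ∑ j, a i * b j * ((‖Q i j‖ ^ 2 : ℝ) : 𝕜) := by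
  refine Finset.sum_congr rfl fun i _ => ?_
  rw [diag_apply, Matrix.mul_assoc, Matrix.mul_assoc, diagonal_mul, mul_apply, Finset.mul_sum]
  refine Finset.sum_congr rfl fun j _ => ?_
  rw [diagonal_mul, star_apply, RCLike.star_def, RCLike.ofReal_pow, ← RCLike.mul_conj]
  ring

theorem norm_trace_diagonal_mul_mul_diagonal_mul_star_le {Q : Matrix ι ι 𝕜}
    (hQ : Q ∈ unitaryGroup ι 𝕜) (a b : ι → ℝ) :
    ‖(diagonal (RCLike.ofReal ∘ a) * Q * diagonal (RCLike.ofReal ∘ b) * star Q).trace‖ ≤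
      (∑ i, |a i|) * ∑ j, |b j| := by
  rw [trace_diagonal_mul_mul_diagonal_mul_star, Finset.sum_mul_sum]
  refine (norm_sum_le _ _).trans <| Finset.sum_le_sum fun i _ => (norm_sum_le _ _).trans <|
    Finset.sum_le_sum fun j _ => ?_
  have hQij : ‖Q i j‖ ^ 2 ≤ 1 := pow_le_one₀ (norm_nonneg _) (entry_norm_bound_of_unitary hQ i j)
  simp only [Function.comp_apply, norm_mul, RCLike.norm_ofReal, abs_pow, abs_norm]
  exact mul_le_of_le_one_right (by positivity) hQij

theorem norm_trace_conj_diagonal_mul_conj_diagonal_le (U V : unitaryGroup ι 𝕜) (a b : ι → ℝ) :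
    ‖(Unitary.conjStarAlgAut 𝕜 _ U (diagonal (RCLike.ofReal ∘ a)) *
        Unitary.conjStarAlgAut 𝕜 _ V (diagonal (RCLike.ofReal ∘ b))).trace‖ ≤
      (∑ i, |a i|) * ∑ j, |b j| := by
  set Q : Matrix ι ι 𝕜 := star (U : Matrix ι ι 𝕜) * V with hQdef
  have hQ : Q ∈ unitaryGroup ι 𝕜 := (star U * V).2
  have hcycle : (Unitary.conjStarAlgAut 𝕜 _ U (diagonal (RCLike.ofReal ∘ a)) *
        Unitary.conjStarAlgAut 𝕜 _ V (diagonal (RCLike.ofReal ∘ b))).trace =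
      (diagonal (RCLike.ofReal ∘ a) * Q * diagonal (RCLike.ofReal ∘ b) * star Q).trace := by
    simp only [hQdef, Unitary.conjStarAlgAut_apply, star_mul, star_star, Matrix.mul_assoc]
    rw [trace_mul_comm]
    simp only [Matrix.mul_assoc]
  exact hcycle ▸ norm_trace_diagonal_mul_mul_diagonal_mul_star_le hQ a b

theorem IsHermitian.norm_trace_mul_le {W A : Matrix ι ι 𝕜} (hW : W.IsHermitian)
    (hA : A.IsHermitian) :
    ‖(W * A).trace‖ ≤ (∑ i, |hW.eigenvalues i|) * ∑ j, |hA.eigenvalues j| := by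
  conv_lhs => rw [hW.spectral_theorem, hA.spectral_theorem]
  exact norm_trace_conj_diagonal_mul_conj_diagonal_le _ _ _ _

end Matrix

section TraceNorm

variable {ι : Type*} [Fintype ι] [DecidableEq ι]

theorem traceNorm_eq_re_trace_cfc_sqrt (A : Matrix ι ι ℂ) :
    traceNorm A = (cfc Real.sqrt (Aᴴ * A)).trace.re := by
  rw [(posSemidef_conjTranspose_mul_self A).1.cfc_eq]
  rfl

theorem traceNorm_nonneg (A : Matrix ι ι ℂ) : 0 ≤ traceNorm A := by
  rw [traceNorm_eq_re_trace_cfc_sqrt, (posSemidef_conjTranspose_mul_self A).1.trace_cfc,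
    Complex.re_sum]
  exact Finset.sum_nonneg fun i _ => Real.sqrt_nonneg _

theorem Matrix.IsHermitian.traceNorm_eq_sum_abs_eigenvalues {A : Matrix ι ι ℂ}
    (hA : A.IsHermitian) : traceNorm A = ∑ i, |hA.eigenvalues i| := by
  have hsqrt : cfc Real.sqrt (Aᴴ * A) = cfc (|·| : ℝ → ℝ) A := by
    rw [hA.eq, ← sq, ← cfc_comp_pow Real.sqrt 2 A]
    simp only [Real.sqrt_sq_eq_abs]
  rw [traceNorm_eq_re_trace_cfc_sqrt, hsqrt, hA.trace_cfc, Complex.re_sum]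
  rfl

theorem Matrix.IsHermitian.norm_trace_mul_le_traceNorm_mul {W A : Matrix ι ι ℂ}
    (hW : W.IsHermitian) (hA : A.IsHermitian) :
    ‖(W * A).trace‖ ≤ traceNorm W * traceNorm A := by
  rw [hW.traceNorm_eq_sum_abs_eigenvalues, hA.traceNorm_eq_sum_abs_eigenvalues]
  exact hW.norm_trace_mul_le hA

theorem Matrix.IsHermitian.abs_re_trace_mul_sub_le {W ρ σ : Matrix ι ι ℂ}
    (hW : W.IsHermitian) (hρ : ρ.IsHermitian) (hσ : σ.IsHermitian) :
    |(W * ρ).trace.re - (W * σ).trace.re| ≤ traceNorm W * traceNorm (ρ - σ) := by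
  rw [← Complex.sub_re, ← trace_sub, ← Matrix.mul_sub]
  exact (Complex.abs_re_le_norm _).trans (hW.norm_trace_mul_le_traceNorm_mul (hρ.sub hσ))

theorem abs_re_trace_mul_sub_le_of_optimal {c : ℝ} {W M ρ σ : Matrix ι ι ℂ}
    (hW : W.IsHermitian) (hM : M.IsHermitian) (hρ : ρ.IsHermitian) (hσ : σ.IsHermitian)
    (hWc : traceNorm W ≤ c) (hMc : traceNorm M ≤ c)
    (hoptW : (W * ρ).trace.re ≤ (M * ρ).trace.re)
    (hoptM : (M * σ).trace.re ≤ (W * σ).trace.re) :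
    |(W * ρ).trace.re - (M * σ).trace.re| ≤ c * traceNorm (ρ - σ) := by
  have hρσ := traceNorm_nonneg (ρ - σ)
  have hWρσ := (hW.abs_re_trace_mul_sub_le hρ hσ).trans (mul_le_mul_of_nonneg_right hWc hρσ)
  have hMρσ := (hM.abs_re_trace_mul_sub_le hρ hσ).trans (mul_le_mul_of_nonneg_right hMc hρσ)
  rw [abs_le] at hWρσ hMρσ ⊢
  constructor <;> linarith

end TraceNorm

theorem witnessed_nonMarkovianity_continuity_general
    {ι : Type*} [Fintype ι] [DecidableEq ι]
    (c : ℝ)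
    (ρ₁ ρ₂ σ₁ σ₂ W₁ W₂ M₁ M₂ : Matrix ι ι ℂ)
    (hρ₁ : ρ₁.IsHermitian) (hρ₂ : ρ₂.IsHermitian)
    (hσ₁ : σ₁.IsHermitian) (hσ₂ : σ₂.IsHermitian)
    (hW₁ : W₁.IsHermitian) (hW₂ : W₂.IsHermitian)
    (hM₁ : M₁.IsHermitian) (hM₂ : M₂.IsHermitian)
    (hW₁n : traceNorm W₁ ≤ c) (hW₂n : traceNorm W₂ ≤ c)
    (hM₁n : traceNorm M₁ ≤ c) (hM₂n : traceNorm M₂ ≤ c)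
    (hoptW₁ : ((W₁ * ρ₁).trace).re ≤ ((M₁ * ρ₁).trace).re)
    (hoptW₂ : ((W₂ * ρ₂).trace).re ≤ ((M₂ * ρ₂).trace).re)
    (hoptM₁ : ((M₁ * σ₁).trace).re ≤ ((W₁ * σ₁).trace).re)
    (hoptM₂ : ((M₂ * σ₂).trace).re ≤ ((W₂ * σ₂).trace).re) :
    |max 0 (((W₁ * ρ₁).trace).re - ((W₂ * ρ₂).trace).re) -
      max 0 (((M₁ * σ₁).trace).re - ((M₂ * σ₂).trace).re)|
      ≤ c * (traceNorm (ρ₁ - σ₁) + traceNorm (ρ₂ - σ₂)) := by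
  have h₁ := abs_re_trace_mul_sub_le_of_optimal hW₁ hM₁ hρ₁ hσ₁ hW₁n hM₁n hoptW₁ hoptM₁
  have h₂ := abs_re_trace_mul_sub_le_of_optimal hW₂ hM₂ hρ₂ hσ₂ hW₂n hM₂n hoptW₂ hoptM₂
  set a₁ := (W₁ * ρ₁).trace.re
  set a₂ := (W₂ * ρ₂).trace.re
  set b₁ := (M₁ * σ₁).trace.re
  set b₂ := (M₂ * σ₂).trace.re
  calc |max 0 (a₁ - a₂) - max 0 (b₁ - b₂)|
      ≤ |(a₁ - a₂) - (b₁ - b₂)| := by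
        rw [max_comm 0 (a₁ - a₂), max_comm 0 (b₁ - b₂)]
        exact abs_max_sub_max_le_abs _ _ _
    _ = |(a₁ - b₁) - (a₂ - b₂)| := by ring_nf
    _ ≤ |a₁ - b₁| + |a₂ - b₂| := abs_sub _ _
    _ ≤ c * (traceNorm (ρ₁ - σ₁) + traceNorm (ρ₂ - σ₂)) := by linarith

/-- Continuity of the witnessed non-Markovianity (core of Theorem 1). -/
theorem witnessed_nonMarkovianity_continuity
    {ι : Type*} [Fintype ι] [DecidableEq ι] [Nonempty ι]
    (c : ℝ) (hc : 0 ≤ c)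
    (ρ₁ ρ₂ σ₁ σ₂ W₁ W₂ M₁ M₂ : Matrix ι ι ℂ)
    (hρ₁ : ρ₁.IsHermitian) (hρ₂ : ρ₂.IsHermitian)
    (hσ₁ : σ₁.IsHermitian) (hσ₂ : σ₂.IsHermitian)
    (hW₁ : W₁.IsHermitian) (hW₂ : W₂.IsHermitian)
    (hM₁ : M₁.IsHermitian) (hM₂ : M₂.IsHermitian)
    (hW₁n : traceNorm W₁ ≤ c) (hW₂n : traceNorm W₂ ≤ c)
    (hM₁n : traceNorm M₁ ≤ c) (hM₂n : traceNorm M₂ ≤ c)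
    (hoptW₁ : ((W₁ * ρ₁).trace).re ≤ ((M₁ * ρ₁).trace).re)
    (hoptW₂ : ((W₂ * ρ₂).trace).re ≤ ((M₂ * ρ₂).trace).re)
    (hoptM₁ : ((M₁ * σ₁).trace).re ≤ ((W₁ * σ₁).trace).re)
    (hoptM₂ : ((M₂ * σ₂).trace).re ≤ ((W₂ * σ₂).trace).re) :
    |max 0 (((W₁ * ρ₁).trace).re - ((W₂ * ρ₂).trace).re) -
      max 0 (((M₁ * σ₁).trace).re - ((M₂ * σ₂).trace).re)|
      ≤ c * (traceNorm (ρ₁ - σ₁) + traceNorm (ρ₂ - σ₂)) :=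
  witnessed_nonMarkovianity_continuity_general c ρ₁ ρ₂ σ₁ σ₂ W₁ W₂ M₁ M₂ hρ₁ hρ₂ hσ₁ hσ₂ hW₁ hW₂ hM₁
    hM₂ hW₁n hW₂n hM₁n hM₂n hoptW₁ hoptW₂ hoptM₁ hoptM₂
end

section
/- Weak duality between the witness form and the generalized robustness (half of Eq. (12) of the paper). Let ι, κ be nonempty finite types, let ρ ∈ Matrix (ι×κ) (ι×κ) ℂ be Hermitian, and let W ∈ Matrix (ι×κ) (ι×κ) ℂ be an entanglement witness normalized by W ≤ 𝟙, i.e. W is Hermitian, 𝟙 − W is positive semidefinite, and Re Tr(W τ) ≥ 0 for every separable τ. Suppose s ≥ 0 is a real number and σ ∈ Matrix (ι×κ) (ι×κ) ℂ is a density matrix (positive semidefinite with trace 1) such that (1/(1+s))·(ρ + s·σ) is separable. Then −Re Tr(W ρ) ≤ s. Consequently, the witnessed value −min_{W≤𝟙} Tr(Wρ) never exceeds the generalized robustness R_G(ρ). -/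
/-! The witness is nonnegative on the separable mixture `(ρ + sσ)/(1+s)`, so
`Re Tr(Wρ) + s Re Tr(Wσ) ≥ 0`; and `W ≤ 𝟙` together with `Tr σ = 1` gives `Re Tr(Wσ) ≤ 1`,
because the trace of a product of two positive semidefinite matrices is nonnegative. -/

open Matrix Kronecker ComplexOrder

/-- A bipartite matrix is separable if it is a finite sum of Kronecker products of
positive semidefinite matrices. -/
def SeparableState {ι κ : Type*} [Fintype ι] [Fintype κ]
    (τ : Matrix (ι × κ) (ι × κ) ℂ) : Prop :=
  ∃ (n : ℕ) (A : Fin n → Matrix ι ι ℂ) (B : Fin n → Matrix κ κ ℂ),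
    (∀ k, (A k).PosSemidef) ∧ (∀ k, (B k).PosSemidef) ∧ τ = ∑ k, (A k) ⊗ₖ (B k)

theorem Matrix.PosSemidef.trace_mul_nonneg {n 𝕜 : Type*} [Fintype n] [RCLike 𝕜]
    {P Q : Matrix n n 𝕜} (hP : P.PosSemidef) (hQ : Q.PosSemidef) : 0 ≤ (P * Q).trace := by
  classical
  open scoped MatrixOrder in
  obtain ⟨B, rfl⟩ := CStarAlgebra.nonneg_iff_eq_star_mul_self.mp hP.nonneg
  rw [Matrix.mul_assoc, trace_mul_comm]
  exact (hQ.mul_mul_conjTranspose_same B).trace_nonneg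

theorem Matrix.trace_mul_le_trace_of_posSemidef_one_sub {n 𝕜 : Type*} [Fintype n]
    [DecidableEq n] [RCLike 𝕜] {W σ : Matrix n n 𝕜} (hW : (1 - W).PosSemidef)
    (hσ : σ.PosSemidef) : (W * σ).trace ≤ σ.trace := by
  have := hW.trace_mul_nonneg hσ
  rwa [Matrix.sub_mul, Matrix.one_mul, trace_sub, sub_nonneg] at this

theorem re_trace_mul_mixture {n : Type*} [Fintype n] (W ρ σ : Matrix n n ℂ) (s : ℝ) :
    ((W * (((1 : ℂ) / (1 + (s : ℂ))) • (ρ + (s : ℂ) • σ))).trace).re =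
      (((W * ρ).trace).re + s * ((W * σ).trace).re) / (1 + s) := by
  have : (1 : ℂ) / (1 + (s : ℂ)) = ((1 + s)⁻¹ : ℝ) := by push_cast; ring
  rw [this, Matrix.mul_smul, trace_smul, Matrix.mul_add, trace_add, Matrix.mul_smul, trace_smul]
  simp only [smul_eq_mul, Complex.re_ofReal_mul, Complex.add_re]
  ring

theorem witness_le_generalizedRobustness_general
    {ι κ : Type*} [Fintype ι] [DecidableEq ι]
    [Fintype κ] [DecidableEq κ]
    (ρ W : Matrix (ι × κ) (ι × κ) ℂ)
    (hWle : ((1 : Matrix (ι × κ) (ι × κ) ℂ) - W).PosSemidef)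
    (hWwit : ∀ τ : Matrix (ι × κ) (ι × κ) ℂ, SeparableState τ → 0 ≤ ((W * τ).trace).re)
    (s : ℝ) (hs : 0 ≤ s)
    (σ : Matrix (ι × κ) (ι × κ) ℂ) (hσ : σ.PosSemidef) (hσtr : σ.trace = 1)
    (hmix : SeparableState (((1 : ℂ) / (1 + (s : ℂ))) • (ρ + (s : ℂ) • σ))) :
    -((W * ρ).trace).re ≤ s := by
  have hmixture : 0 ≤ ((W * ρ).trace).re + s * ((W * σ).trace).re := by
    have := hWwit _ hmix
    rwa [re_trace_mul_mixture, le_div_iff₀ (by linarith), zero_mul] at this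
  have hWσ : ((W * σ).trace).re ≤ 1 := by
    simpa [hσtr] using (Complex.le_def.mp (trace_mul_le_trace_of_posSemidef_one_sub hWle hσ)).1
  linarith [mul_le_of_le_one_right hs hWσ]

/-- Weak duality between the witness form and the generalized robustness
(half of Eq. (12)). -/
theorem witness_le_generalizedRobustness
    {ι κ : Type*} [Fintype ι] [DecidableEq ι] [Nonempty ι]
    [Fintype κ] [DecidableEq κ] [Nonempty κ]
    (ρ W : Matrix (ι × κ) (ι × κ) ℂ)
    (hρ : ρ.IsHermitian) (hW : W.IsHermitian)
    (hWle : ((1 : Matrix (ι × κ) (ι × κ) ℂ) - W).PosSemidef)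
    (hWwit : ∀ τ : Matrix (ι × κ) (ι × κ) ℂ, SeparableState τ → 0 ≤ ((W * τ).trace).re)
    (s : ℝ) (hs : 0 ≤ s)
    (σ : Matrix (ι × κ) (ι × κ) ℂ) (hσ : σ.PosSemidef) (hσtr : σ.trace = 1)
    (hmix : SeparableState (((1 : ℂ) / (1 + (s : ℂ))) • (ρ + (s : ℂ) • σ))) :
    -((W * ρ).trace).re ≤ s :=
  witness_le_generalizedRobustness_general ρ W hWle hWwit s hs σ hσ hσtr hmix
end

section
/- Invariance of the generalized robustness under local unitaries (Property 4). Let ι, κ be nonempty finite types, U ∈ Matrix ι ι ℂ and V ∈ Matrix κ κ ℂ unitary, and ρ ∈ Matrix (ι×κ) (ι×κ) ℂ. Then for every real s ≥ 0: there exists a density matrix σ with (1/(1+s))·(ρ + s·σ) separable if and only if there exists a density matrix σ' with (1/(1+s))·((U⊗V) ρ (U⊗V)ᴴ + s·σ') separable. In particular, a matrix τ is separable if and only if (U⊗V) τ (U⊗V)ᴴ is separable, and hence R_G((U⊗V) ρ (U⊗V)ᴴ) = R_G(ρ). -/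
open Matrix Kronecker ComplexOrder

/-- The generalized robustness of entanglement. -/
noncomputable def RG {ι κ : Type*} [Fintype ι] [Fintype κ]
    (ρ : Matrix (ι × κ) (ι × κ) ℂ) : ℝ :=
  sInf {s : ℝ | 0 ≤ s ∧ ∃ σ : Matrix (ι × κ) (ι × κ) ℂ,
    σ.PosSemidef ∧ σ.trace = 1 ∧
    SeparableState (((1 : ℂ) / (1 + (s : ℂ))) • (ρ + (s : ℂ) • σ))}

lemma kronecker_conjT {ι κ : Type*} [Fintype ι] [Fintype κ]
    (U : Matrix ι ι ℂ) (V : Matrix κ κ ℂ) : (U ⊗ₖ V)ᴴ = Uᴴ ⊗ₖ Vᴴ := by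
  ext ⟨i, j⟩ ⟨i', j'⟩
  simp [conjTranspose_apply, kroneckerMap_apply, mul_comm]

lemma sep_conj {ι κ : Type*} [Fintype ι] [DecidableEq ι] [Fintype κ] [DecidableEq κ]
    (U : Matrix ι ι ℂ) (V : Matrix κ κ ℂ) (τ : Matrix (ι × κ) (ι × κ) ℂ)
    (h : SeparableState τ) : SeparableState ((U ⊗ₖ V) * τ * (U ⊗ₖ V)ᴴ) := by
  obtain ⟨n, A, B, hA, hB, rfl⟩ := h
  refine ⟨n, fun k => U * A k * Uᴴ, fun k => V * B k * Vᴴ,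
    fun k => (hA k).mul_mul_conjTranspose_same U,
    fun k => (hB k).mul_mul_conjTranspose_same V, ?_⟩
  rw [Finset.mul_sum, Finset.sum_mul]
  refine Finset.sum_congr rfl fun k _ => ?_
  rw [kronecker_conjT, ← mul_kronecker_mul, ← mul_kronecker_mul]

lemma unitary_kronecker {ι κ : Type*} [Fintype ι] [DecidableEq ι] [Fintype κ] [DecidableEq κ]
    {U : Matrix ι ι ℂ} {V : Matrix κ κ ℂ}
    (hU : U ∈ Matrix.unitaryGroup ι ℂ) (hV : V ∈ Matrix.unitaryGroup κ ℂ) :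
    (U ⊗ₖ V)ᴴ * (U ⊗ₖ V) = 1 ∧ (U ⊗ₖ V) * (U ⊗ₖ V)ᴴ = 1 := by
  have hU1 : Uᴴ * U = 1 := by
    have := Matrix.mem_unitaryGroup_iff'.mp hU
    rwa [Matrix.star_eq_conjTranspose] at this
  have hU2 : U * Uᴴ = 1 := by
    have := Matrix.mem_unitaryGroup_iff.mp hU
    rwa [Matrix.star_eq_conjTranspose] at this
  have hV1 : Vᴴ * V = 1 := by
    have := Matrix.mem_unitaryGroup_iff'.mp hV
    rwa [Matrix.star_eq_conjTranspose] at this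
  have hV2 : V * Vᴴ = 1 := by
    have := Matrix.mem_unitaryGroup_iff.mp hV
    rwa [Matrix.star_eq_conjTranspose] at this
  constructor <;> rw [kronecker_conjT, ← mul_kronecker_mul]
  · rw [hU1, hV1, one_kronecker_one]
  · rw [hU2, hV2, one_kronecker_one]

lemma conj_cancel {ι κ : Type*} [Fintype ι] [DecidableEq ι] [Fintype κ] [DecidableEq κ]
    {W : Matrix (ι × κ) (ι × κ) ℂ} (h1 : Wᴴ * W = 1)
    (X : Matrix (ι × κ) (ι × κ) ℂ) : Wᴴ * (W * X * Wᴴ) * W = X := by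
  calc Wᴴ * (W * X * Wᴴ) * W = (Wᴴ * W) * X * (Wᴴ * W) := by
        simp only [Matrix.mul_assoc]
    _ = X := by rw [h1, Matrix.one_mul, Matrix.mul_one]

lemma sep_iff {ι κ : Type*} [Fintype ι] [DecidableEq ι] [Fintype κ] [DecidableEq κ]
    {U : Matrix ι ι ℂ} {V : Matrix κ κ ℂ}
    (hU : U ∈ Matrix.unitaryGroup ι ℂ) (hV : V ∈ Matrix.unitaryGroup κ ℂ)
    (τ : Matrix (ι × κ) (ι × κ) ℂ) :
    SeparableState τ ↔ SeparableState ((U ⊗ₖ V) * τ * (U ⊗ₖ V)ᴴ) := by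
  obtain ⟨h1, h2⟩ := unitary_kronecker hU hV
  constructor
  · exact sep_conj U V τ
  · intro h
    have := sep_conj Uᴴ Vᴴ _ h
    rwa [← kronecker_conjT, conjTranspose_conjTranspose, conj_cancel h1] at this

/-- Invariance of the generalized robustness under local unitaries (Property 4). -/
theorem RG_local_unitary_invariance
    {ι κ : Type*} [Fintype ι] [DecidableEq ι] [Nonempty ι]
    [Fintype κ] [DecidableEq κ] [Nonempty κ]
    (U : Matrix ι ι ℂ) (V : Matrix κ κ ℂ)
    (hU : U ∈ Matrix.unitaryGroup ι ℂ) (hV : V ∈ Matrix.unitaryGroup κ ℂ)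
    (ρ : Matrix (ι × κ) (ι × κ) ℂ) :
    (∀ s : ℝ, 0 ≤ s →
      ((∃ σ : Matrix (ι × κ) (ι × κ) ℂ, σ.PosSemidef ∧ σ.trace = 1 ∧
          SeparableState (((1 : ℂ) / (1 + (s : ℂ))) • (ρ + (s : ℂ) • σ))) ↔
       (∃ σ' : Matrix (ι × κ) (ι × κ) ℂ, σ'.PosSemidef ∧ σ'.trace = 1 ∧
          SeparableState (((1 : ℂ) / (1 + (s : ℂ))) •
            ((U ⊗ₖ V) * ρ * (U ⊗ₖ V)ᴴ + (s : ℂ) • σ'))))) ∧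
    (∀ τ : Matrix (ι × κ) (ι × κ) ℂ,
      SeparableState τ ↔ SeparableState ((U ⊗ₖ V) * τ * (U ⊗ₖ V)ᴴ)) ∧
    RG ((U ⊗ₖ V) * ρ * (U ⊗ₖ V)ᴴ) = RG ρ := by
  obtain ⟨h1, h2⟩ := unitary_kronecker hU hV
  set W : Matrix (ι × κ) (ι × κ) ℂ := U ⊗ₖ V with hW
  have h1' : Wᴴ * W = 1 := h1
  have h2' : W * Wᴴ = 1 := h2
  have expand : ∀ (c t : ℂ) (X Y : Matrix (ι × κ) (ι × κ) ℂ),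
      c • (W * X * Wᴴ + t • (W * Y * Wᴴ)) = W * (c • (X + t • Y)) * Wᴴ := by
    intros c t X Y
    simp only [Matrix.mul_add, Matrix.add_mul, Matrix.mul_smul, Matrix.smul_mul, smul_add]
  have expand2 : ∀ (c t : ℂ) (σ : Matrix (ι × κ) (ι × κ) ℂ),
      Wᴴ * (c • (W * ρ * Wᴴ + t • σ)) * W = c • (ρ + t • (Wᴴ * σ * W)) := by
    intros c t σ
    simp only [Matrix.mul_add, Matrix.add_mul, Matrix.mul_smul, Matrix.smul_mul, smul_add]
    rw [show Wᴴ * (W * ρ * Wᴴ) * W = ρ from conj_cancel h1' ρ]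
  have key : ∀ s : ℝ, 0 ≤ s →
      ((∃ σ : Matrix (ι × κ) (ι × κ) ℂ, σ.PosSemidef ∧ σ.trace = 1 ∧
          SeparableState (((1 : ℂ) / (1 + (s : ℂ))) • (ρ + (s : ℂ) • σ))) ↔
       (∃ σ' : Matrix (ι × κ) (ι × κ) ℂ, σ'.PosSemidef ∧ σ'.trace = 1 ∧
          SeparableState (((1 : ℂ) / (1 + (s : ℂ))) •
            (W * ρ * Wᴴ + (s : ℂ) • σ')))) := by
    intro s _hs
    constructor
    · rintro ⟨σ, hps, htr, hsep⟩
      refine ⟨W * σ * Wᴴ, hps.mul_mul_conjTranspose_same W, ?_, ?_⟩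
      · rw [Matrix.trace_mul_cycle, h1', Matrix.one_mul, htr]
      · rw [expand]
        have := sep_conj U V _ hsep
        rwa [← hW] at this
    · rintro ⟨σ, hps, htr, hsep⟩
      refine ⟨Wᴴ * σ * W, ?_, ?_, ?_⟩
      · have := hps.mul_mul_conjTranspose_same Wᴴ
        rwa [conjTranspose_conjTranspose] at this
      · rw [Matrix.trace_mul_cycle, h2', Matrix.one_mul, htr]
      · rw [← expand2]
        have := sep_conj Uᴴ Vᴴ _ hsep
        rwa [← kronecker_conjT, ← hW, conjTranspose_conjTranspose] at this
  refine ⟨key, sep_iff hU hV, ?_⟩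
  unfold RG
  congr 1
  ext s
  simp only [Set.mem_setOf_eq]
  constructor
  · rintro ⟨hs, h⟩
    exact ⟨hs, (key s hs).mpr h⟩
  · rintro ⟨hs, h⟩
    exact ⟨hs, (key s hs).mp h⟩
end
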